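/- arXiv:1403.6580 — 2 statements merged into one kernel-verified Lean document; each statement's English description precedes it below -/
import Mathlib

section
/- Let n, m ∈ ℝ³ be unit vectors with ‖n − m‖ ≤ ε for some 0 < ε ≤ 1, and set P = id − n⊗n and Q = id − m⊗m. Let B : ℝ³ → ℝ³ be a linear map with ‖B − Q∘P‖ ≤ ε² and let J ∈ ℝ with |J − 1| ≤ ε². Then ‖B∘B* − J·Q‖ ≤ 8ε², where B* denotes the adjoint of B and all norms are operator norms induced by the Euclidean norm. -/
/-- The rank-one operator `a ⊗ b : x ↦ ⟨b, x⟩ • a` on a real inner product space. -/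
noncomputable def tensorCLM {E : Type*} [NormedAddCommGroup E] [InnerProductSpace ℝ E]
    (a b : E) : E →L[ℝ] E :=
  (innerSL ℝ b).smulRight a

/-!
`P` and `Q` are orthogonal projections, so `A = Q ∘ P` has norm at most `1` and
`A A* = Q P Q = Q - (Q n) ⊗ (Q n)`, while `‖Q n‖ = ‖Q (n - m)‖ ≤ ε` because `Q m = 0`. Hence
`B B* - J Q = (B B* - A A*) + (1 - J) Q - (Q n) ⊗ (Q n)`,
where the first term is at most `‖B - A‖ (2 ‖A‖ + ‖B - A‖) ≤ 3 ε²` and each of the other two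
is at most `ε²`.
-/

section CStarRing

variable {R : Type*} [NonUnitalNormedRing R] [StarRing R] [NormedStarGroup R]

theorem norm_mul_star_sub_mul_star_le (a b : R) :
    ‖b * star b - a * star a‖ ≤ ‖b - a‖ * (2 * ‖a‖ + ‖b - a‖) := by
  set e := b - a
  have hb : b = a + e := by simp [e]
  have hsplit : b * star b - a * star a = a * star e + e * star a + e * star e := by
    rw [hb, star_add]; noncomm_ring
  calc ‖b * star b - a * star a‖
      ≤ ‖a‖ * ‖star e‖ + ‖e‖ * ‖star a‖ + ‖e‖ * ‖star e‖ := by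
        rw [hsplit]
        exact (norm_add₃_le).trans (by gcongr <;> exact norm_mul_le _ _)
    _ = ‖e‖ * (2 * ‖a‖ + ‖e‖) := by simp only [norm_star]; ring

end CStarRing

section TensorCLM

variable {E : Type*} [NormedAddCommGroup E] [InnerProductSpace ℝ E]

@[simp]
theorem tensorCLM_apply (a b x : E) : tensorCLM a b x = inner ℝ b x • a := rfl

theorem norm_tensorCLM_le (a b : E) : ‖tensorCLM a b‖ ≤ ‖a‖ * ‖b‖ := by
  refine ContinuousLinearMap.opNorm_le_bound _ (by positivity) fun x => ?_
  rw [tensorCLM_apply, norm_smul, Real.norm_eq_abs, mul_comm ‖a‖, mul_right_comm]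
  gcongr
  exact abs_real_inner_le_norm b x

theorem mul_tensorCLM (T : E →L[ℝ] E) (a b : E) : T * tensorCLM a b = tensorCLM (T a) b := by
  ext x; simp

variable [CompleteSpace E]

theorem tensorCLM_mul (T : E →L[ℝ] E) (a b : E) :
    tensorCLM a b * T = tensorCLM a (star T b) := by
  ext x
  simp [ContinuousLinearMap.star_eq_adjoint, ContinuousLinearMap.adjoint_inner_left]

theorem star_tensorCLM (a b : E) : star (tensorCLM a b) = tensorCLM b a := by
  rw [ContinuousLinearMap.star_eq_adjoint, eq_comm, ContinuousLinearMap.eq_adjoint_iff]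
  intro x y
  simp only [tensorCLM_apply, real_inner_smul_left, real_inner_smul_right, real_inner_comm x a]
  ring

theorem isStarProjection_tensorCLM_self {m : E} (hm : ‖m‖ = 1) :
    IsStarProjection (tensorCLM m m) where
  isIdempotentElem := by
    rw [IsIdempotentElem, mul_tensorCLM, tensorCLM_apply, real_inner_self_eq_norm_sq, hm,
      one_pow, one_smul]
  isSelfAdjoint := star_tensorCLM m m

theorem isStarProjection_one_sub_tensorCLM_self {m : E} (hm : ‖m‖ = 1) :
    IsStarProjection (1 - tensorCLM m m) :=
  (isStarProjection_tensorCLM_self hm).one_sub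

theorem norm_one_sub_tensorCLM_self_apply_le {m : E} (hm : ‖m‖ = 1) (n : E) :
    ‖(1 - tensorCLM m m) n‖ ≤ ‖n - m‖ := by
  have hQm : (1 - tensorCLM m m) m = 0 := by simp [hm]
  calc ‖(1 - tensorCLM m m) n‖ = ‖(1 - tensorCLM m m) (n - m)‖ := by
        rw [map_sub, hQm, sub_zero]
    _ ≤ 1 * ‖n - m‖ :=
        (1 - tensorCLM m m).le_of_opNorm_le (isStarProjection_one_sub_tensorCLM_self hm).norm_le _
    _ = ‖n - m‖ := one_mul _

theorem IsStarProjection.mul_one_sub_tensorCLM_self_mul {q : E →L[ℝ] E}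
    (hq : IsStarProjection q) (n : E) :
    q * (1 - tensorCLM n n) * q = q - tensorCLM (q n) (q n) := by
  rw [mul_sub, mul_one, sub_mul, hq.isIdempotentElem.eq, mul_tensorCLM, tensorCLM_mul,
    hq.isSelfAdjoint.star_eq]

end TensorCLM

theorem surface_quadrature_matrix_bound_general
    (n m : EuclideanSpace ℝ (Fin 3)) (hn : ‖n‖ = 1) (hm : ‖m‖ = 1)
    (ε : ℝ) (hε1 : ε ≤ 1) (hnm : ‖n - m‖ ≤ ε)
    (B : EuclideanSpace ℝ (Fin 3) →L[ℝ] EuclideanSpace ℝ (Fin 3))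
    (hB : ‖B - ((1 : EuclideanSpace ℝ (Fin 3) →L[ℝ] EuclideanSpace ℝ (Fin 3)) - tensorCLM m m) ∘L
        ((1 : EuclideanSpace ℝ (Fin 3) →L[ℝ] EuclideanSpace ℝ (Fin 3)) - tensorCLM n n)‖ ≤ ε ^ 2)
    (J : ℝ) (hJ : |J - 1| ≤ ε ^ 2) :
    ‖B ∘L ContinuousLinearMap.adjoint B -
        J • ((1 : EuclideanSpace ℝ (Fin 3) →L[ℝ] EuclideanSpace ℝ (Fin 3)) - tensorCLM m m)‖ ≤
      8 * ε ^ 2 := by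
  set Q := (1 : EuclideanSpace ℝ (Fin 3) →L[ℝ] EuclideanSpace ℝ (Fin 3)) - tensorCLM m m
  set P := (1 : EuclideanSpace ℝ (Fin 3) →L[ℝ] EuclideanSpace ℝ (Fin 3)) - tensorCLM n n
  have hQ : IsStarProjection Q := isStarProjection_one_sub_tensorCLM_self hm
  have hP : IsStarProjection P := isStarProjection_one_sub_tensorCLM_self hn
  have hQn : ‖Q n‖ ≤ ε := (norm_one_sub_tensorCLM_self_apply_le hm n).trans hnm
  have hQP : ‖Q * P‖ ≤ 1 :=
    (norm_mul_le _ _).trans (mul_le_one₀ hQ.norm_le (norm_nonneg _) hP.norm_le)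
  have hAA : Q * P * star (Q * P) = Q - tensorCLM (Q n) (Q n) := by
    rw [star_mul, hP.isSelfAdjoint.star_eq, hQ.isSelfAdjoint.star_eq, ← mul_assoc,
      mul_assoc Q, hP.isIdempotentElem.eq, hQ.mul_one_sub_tensorCLM_self_mul]
  have hsplit : B ∘L ContinuousLinearMap.adjoint B - J • Q =
      (B * star B - Q * P * star (Q * P)) + ((1 - J) • Q - tensorCLM (Q n) (Q n)) := by
    rw [hAA, ← ContinuousLinearMap.star_eq_adjoint]
    module
  have hB' : ‖B - Q * P‖ ≤ ε ^ 2 := hB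
  have hε : 0 ≤ ε := (norm_nonneg _).trans hnm
  rw [hsplit]
  calc _ ≤ ‖B - Q * P‖ * (2 * ‖Q * P‖ + ‖B - Q * P‖) + (‖1 - J‖ * ‖Q‖ + ‖Q n‖ * ‖Q n‖) :=
        (norm_add_le _ _).trans <| add_le_add (norm_mul_star_sub_mul_star_le _ _) <|
          (norm_sub_le _ _).trans <| add_le_add (norm_smul_le _ _) (norm_tensorCLM_le _ _)
    _ ≤ ε ^ 2 * (2 * 1 + ε ^ 2) + (ε ^ 2 * 1 + ε * ε) := by
        rw [Real.norm_eq_abs, abs_sub_comm]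
        gcongr
        exact hQ.norm_le
    _ ≤ 8 * ε ^ 2 := by nlinarith [mul_le_one₀ hε1 hε hε1]

/-- Let `n, m ∈ ℝ³` be unit vectors with `‖n - m‖ ≤ ε` for some `0 < ε ≤ 1`, and set
`P = id - n⊗n` and `Q = id - m⊗m`. Let `B : ℝ³ → ℝ³` be a linear map with
`‖B - Q ∘ P‖ ≤ ε²` and let `J ∈ ℝ` with `|J - 1| ≤ ε²`. Then `‖B ∘ B* - J • Q‖ ≤ 8 ε²`,
where `B*` denotes the adjoint of `B` and all norms are operator norms induced by the
Euclidean norm. -/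
theorem surface_quadrature_matrix_bound
    (n m : EuclideanSpace ℝ (Fin 3)) (hn : ‖n‖ = 1) (hm : ‖m‖ = 1)
    (ε : ℝ) (hε0 : 0 < ε) (hε1 : ε ≤ 1) (hnm : ‖n - m‖ ≤ ε)
    (B : EuclideanSpace ℝ (Fin 3) →L[ℝ] EuclideanSpace ℝ (Fin 3))
    (hB : ‖B - ((1 : EuclideanSpace ℝ (Fin 3) →L[ℝ] EuclideanSpace ℝ (Fin 3)) - tensorCLM m m) ∘L
        ((1 : EuclideanSpace ℝ (Fin 3) →L[ℝ] EuclideanSpace ℝ (Fin 3)) - tensorCLM n n)‖ ≤ ε ^ 2)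
    (J : ℝ) (hJ : |J - 1| ≤ ε ^ 2) :
    ‖B ∘L ContinuousLinearMap.adjoint B -
        J • ((1 : EuclideanSpace ℝ (Fin 3) →L[ℝ] EuclideanSpace ℝ (Fin 3)) - tensorCLM m m)‖ ≤
      8 * ε ^ 2 :=
  surface_quadrature_matrix_bound_general n m hn hm ε hε1 hnm B hB J hJ
end

section
/- Let W and V be real vector spaces and V_h ⊆ V a linear subspace. Let a : W × W → ℝ and j : V × V → ℝ be symmetric positive semidefinite bilinear forms, a_h : V × V → ℝ a bilinear form, L : V → W a linear map, and l : W → ℝ, l_h : V → ℝ linear functionals. Write |||w||| = a(w,w)^{1/2}, |v|_F = j(v,v)^{1/2}, and N(v) = (|||L v|||² + |v|_F²)^{1/2}. Suppose u ∈ W, ū ∈ V and u_h ∈ V_h satisfy: (i) a(u, L v) = l(L v) for all v ∈ V_h; (ii) a_h(u_h, v) + j(u_h, v) = l_h(v) for all v ∈ V_h; (iii) j(ū, v) = 0 for all v ∈ V_h. Suppose further S_a, S_l ≥ 0 are such that |a(L u_h, L v) − a_h(u_h, v)| ≤ S_a·N(v) and |l(L v) − l_h(v)| ≤ S_l·N(v)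 for all v ∈ V_h. Then for every π ∈ V_h: (|||u − L u_h|||² + j(ū − u_h, ū − u_h))^{1/2} ≤ 2·(|||u − L π|||² + j(ū − π, ū − π))^{1/2} + S_a + S_l. -/
section strangHelpers

variable {W V : Type*} [AddCommGroup W] [Module ℝ W] [AddCommGroup V] [Module ℝ V]
variable (a : W →ₗ[ℝ] W →ₗ[ℝ] ℝ) (j : V →ₗ[ℝ] V →ₗ[ℝ] ℝ)

lemma strang_comb_sq_cs (ha_symm : ∀ w w' : W, a w w' = a w' w) (ha_pos : ∀ w : W, 0 ≤ a w w)
    (hj_symm : ∀ v v' : V, j v v' = j v' v) (hj_pos : ∀ v : V, 0 ≤ j v v)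
    (w w' : W) (v v' : V) :
    (a w w' + j v v') ^ 2 ≤ (a w w + j v v) * (a w' w' + j v' v') := by
  have h : ∀ t : ℝ, 0 ≤ (a w' w' + j v' v') * (t * t) + (2 * (a w w' + j v v')) * t
      + (a w w + j v v) := by
    intro t
    have h1 := ha_pos (w + t • w')
    have h2 := hj_pos (v + t • v')
    simp only [map_add, map_smul, LinearMap.add_apply, LinearMap.smul_apply, smul_eq_mul] at h1 h2
    rw [ha_symm w' w] at h1
    rw [hj_symm v' v] at h2
    ring_nf at h1 h2 ⊢
    linarith
  have hd := discrim_le_zero h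
  unfold discrim at hd
  nlinarith [hd]

lemma strang_comb_cs (ha_symm : ∀ w w' : W, a w w' = a w' w) (ha_pos : ∀ w : W, 0 ≤ a w w)
    (hj_symm : ∀ v v' : V, j v v' = j v' v) (hj_pos : ∀ v : V, 0 ≤ j v v)
    (w w' : W) (v v' : V) :
    a w w' + j v v' ≤ Real.sqrt (a w w + j v v) * Real.sqrt (a w' w' + j v' v') := by
  have h1 : 0 ≤ a w w + j v v := add_nonneg (ha_pos _) (hj_pos _)
  calc a w w' + j v v' ≤ |a w w' + j v v'| := le_abs_self _
    _ = Real.sqrt ((a w w' + j v v') ^ 2) := (Real.sqrt_sq_eq_abs _).symm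
    _ ≤ Real.sqrt ((a w w + j v v) * (a w' w' + j v' v')) :=
        Real.sqrt_le_sqrt (strang_comb_sq_cs a j ha_symm ha_pos hj_symm hj_pos w w' v v')
    _ = Real.sqrt (a w w + j v v) * Real.sqrt (a w' w' + j v' v') := Real.sqrt_mul h1 _

lemma strang_comb_tri (ha_symm : ∀ w w' : W, a w w' = a w' w) (ha_pos : ∀ w : W, 0 ≤ a w w)
    (hj_symm : ∀ v v' : V, j v v' = j v' v) (hj_pos : ∀ v : V, 0 ≤ j v v)
    (w w' : W) (v v' : V) :
    Real.sqrt (a (w + w') (w + w') + j (v + v') (v + v')) ≤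
      Real.sqrt (a w w + j v v) + Real.sqrt (a w' w' + j v' v') := by
  set A := Real.sqrt (a w w + j v v) with hA
  set B := Real.sqrt (a w' w' + j v' v') with hB
  have h1 : 0 ≤ a w w + j v v := add_nonneg (ha_pos _) (hj_pos _)
  have h2 : 0 ≤ a w' w' + j v' v' := add_nonneg (ha_pos _) (hj_pos _)
  have hA2 : A ^ 2 = a w w + j v v := Real.sq_sqrt h1
  have hB2 : B ^ 2 = a w' w' + j v' v' := Real.sq_sqrt h2
  have hcs := strang_comb_cs a j ha_symm ha_pos hj_symm hj_pos w w' v v'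
  have hexp : a (w + w') (w + w') + j (v + v') (v + v') =
      (a w w + j v v) + 2 * (a w w' + j v v') + (a w' w' + j v' v') := by
    have e1 : a w' w = a w w' := ha_symm _ _
    have e2 : j v' v = j v v' := hj_symm _ _
    simp only [map_add, LinearMap.add_apply]
    linarith
  have hle : a (w + w') (w + w') + j (v + v') (v + v') ≤ (A + B) ^ 2 := by
    rw [hexp]; nlinarith [hcs]
  calc Real.sqrt (a (w + w') (w + w') + j (v + v') (v + v'))
      ≤ Real.sqrt ((A + B) ^ 2) := Real.sqrt_le_sqrt hle
    _ = |A + B| := Real.sqrt_sq_eq_abs _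
    _ = A + B := abs_of_nonneg (add_nonneg (Real.sqrt_nonneg _) (Real.sqrt_nonneg _))

end strangHelpers


/-- Abstract Strang-type lemma. Let `W` and `V` be real vector spaces and `V_h ⊆ V` a linear
subspace. Let `a : W × W → ℝ` and `j : V × V → ℝ` be symmetric positive semidefinite bilinear
forms, `a_h : V × V → ℝ` a bilinear form, `L : V → W` a linear map, and `l : W → ℝ`,
`l_h : V → ℝ` linear functionals. Write `|||w||| = a(w,w)^{1/2}`, `|v|_F = j(v,v)^{1/2}`, and
`N(v) = (|||L v|||² + |v|_F²)^{1/2}`. Suppose `u ∈ W`, `ū ∈ V` and `u_h ∈ V_h` satisfy: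
(i) `a(u, L v) = l(L v)` for all `v ∈ V_h`;
(ii) `a_h(u_h, v) + j(u_h, v) = l_h(v)` for all `v ∈ V_h`;
(iii) `j(ū, v) = 0` for all `v ∈ V_h`.
Suppose further `S_a, S_l ≥ 0` are such that `|a(L u_h, L v) - a_h(u_h, v)| ≤ S_a · N(v)` and
`|l(L v) - l_h(v)| ≤ S_l · N(v)` for all `v ∈ V_h`. Then for every `π ∈ V_h`:
`(|||u - L u_h|||² + j(ū - u_h, ū - u_h))^{1/2}
  ≤ 2 (|||u - L π|||² + j(ū - π, ū - π))^{1/2} + S_a + S_l`. -/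
theorem abstract_strang_lemma
    {W V : Type*} [AddCommGroup W] [Module ℝ W] [AddCommGroup V] [Module ℝ V]
    (Vh : Submodule ℝ V)
    (a : W →ₗ[ℝ] W →ₗ[ℝ] ℝ) (j : V →ₗ[ℝ] V →ₗ[ℝ] ℝ) (ah : V →ₗ[ℝ] V →ₗ[ℝ] ℝ)
    (L : V →ₗ[ℝ] W) (l : W →ₗ[ℝ] ℝ) (lh : V →ₗ[ℝ] ℝ)
    (ha_symm : ∀ w w' : W, a w w' = a w' w) (ha_pos : ∀ w : W, 0 ≤ a w w)
    (hj_symm : ∀ v v' : V, j v v' = j v' v) (hj_pos : ∀ v : V, 0 ≤ j v v)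
    (u : W) (ubar : V) (uh : V) (huh : uh ∈ Vh)
    (hgalerkin : ∀ v ∈ Vh, a u (L v) = l (L v))
    (hdiscrete : ∀ v ∈ Vh, ah uh v + j uh v = lh v)
    (hconsistent : ∀ v ∈ Vh, j ubar v = 0)
    (Sa Sl : ℝ) (hSa0 : 0 ≤ Sa) (hSl0 : 0 ≤ Sl)
    (hSa : ∀ v ∈ Vh, |a (L uh) (L v) - ah uh v| ≤ Sa * Real.sqrt (a (L v) (L v) + j v v))
    (hSl : ∀ v ∈ Vh, |l (L v) - lh v| ≤ Sl * Real.sqrt (a (L v) (L v) + j v v)) :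
    ∀ π ∈ Vh,
      Real.sqrt (a (u - L uh) (u - L uh) + j (ubar - uh) (ubar - uh)) ≤
        2 * Real.sqrt (a (u - L π) (u - L π) + j (ubar - π) (ubar - π)) + Sa + Sl := by
  intro p hp
  have he : p - uh ∈ Vh := Vh.sub_mem hp huh
  set e := p - uh with he_def
  set Ne := Real.sqrt (a (L e) (L e) + j e e) with hNe_def
  set A := Real.sqrt (a (u - L p) (u - L p) + j (ubar - p) (ubar - p)) with hA_def
  have hLe : L e = L p - L uh := by rw [he_def, map_sub]
  have hgal := hgalerkin e he
  have hdis := hdiscrete e he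
  have hcon := hconsistent e he
  have hSa' := hSa e he
  have hSl' := hSl e he
  have hNe_nonneg : 0 ≤ Ne := Real.sqrt_nonneg _
  have hA_nonneg : 0 ≤ A := Real.sqrt_nonneg _
  have hNe_sq : Ne ^ 2 = a (L e) (L e) + j e e :=
    Real.sq_sqrt (add_nonneg (ha_pos _) (hj_pos _))
  -- splitting identity
  have h1 : a (L e) (L e) = a (L p - u) (L e) + a (u - L uh) (L e) := by
    rw [hLe]
    simp only [map_sub, LinearMap.sub_apply]
    ring
  have h2 : j e e = j (p - ubar) e + j (ubar - uh) e := by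
    rw [he_def]
    simp only [map_sub, LinearMap.sub_apply]
    ring
  have h3 : a (u - L uh) (L e) = l (L e) - a (L uh) (L e) := by
    simp only [map_sub, LinearMap.sub_apply]
    linarith [hgal]
  have h4 : j (ubar - uh) e = - j uh e := by
    simp only [map_sub, LinearMap.sub_apply]
    linarith [hcon]
  -- Cauchy-Schwarz bound for the first part
  have hcs : a (L p - u) (L e) + j (p - ubar) e ≤ A * Ne := by
    have h := strang_comb_cs a j ha_symm ha_pos hj_symm hj_pos (L p - u) (L e) (p - ubar) e
    have ea : a (L p - u) (L p - u) = a (u - L p) (u - L p) := by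
      have : L p - u = -(u - L p) := by abel
      rw [this]
      simp only [map_neg, LinearMap.neg_apply, neg_neg]
    have ej : j (p - ubar) (p - ubar) = j (ubar - p) (ubar - p) := by
      have : p - ubar = -(ubar - p) := by abel
      rw [this]
      simp only [map_neg, LinearMap.neg_apply, neg_neg]
    rw [ea, ej] at h
    exact h
  -- quadrature error bounds
  have hq1 : l (L e) - lh e ≤ Sl * Ne := le_trans (le_abs_self _) hSl'
  have hq2 : ah uh e - a (L uh) (L e) ≤ Sa * Ne := by
    have : ah uh e - a (L uh) (L e) ≤ |a (L uh) (L e) - ah uh e| := by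
      rw [abs_sub_comm]; exact le_abs_self _
    exact le_trans this hSa'
  -- key estimate
  have key : a (L e) (L e) + j e e ≤ (A + Sa + Sl) * Ne := by
    have : a (L e) (L e) + j e e =
        (a (L p - u) (L e) + j (p - ubar) e) + (l (L e) - lh e)
          + (ah uh e - a (L uh) (L e)) := by
      rw [h1, h2, h3, h4]
      linarith [hdis]
    rw [this]
    nlinarith [hcs, hq1, hq2]
  have hNe_le : Ne ≤ A + Sa + Sl := by
    rcases eq_or_lt_of_le hNe_nonneg with h0 | h0
    · rw [← h0]; positivity
    · nlinarith [hNe_sq, key]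
  -- triangle inequality
  have htri : Real.sqrt (a (u - L uh) (u - L uh) + j (ubar - uh) (ubar - uh)) ≤ A + Ne := by
    have h := strang_comb_tri a j ha_symm ha_pos hj_symm hj_pos (u - L p) (L e) (ubar - p) e
    have e1 : (u - L p) + L e = u - L uh := by rw [hLe]; abel
    have e2 : (ubar - p) + e = ubar - uh := by rw [he_def]; abel
    rw [e1, e2] at h
    exact h
  calc Real.sqrt (a (u - L uh) (u - L uh) + j (ubar - uh) (ubar - uh)) ≤ A + Ne := htri
    _ ≤ A + (A + Sa + Sl) := by linarith
    _ = 2 * A + Sa + Sl := by ring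
end
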